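/- arXiv:1903.07407 — 2 statements merged into one kernel-verified Lean document; each statement's English description precedes it below -/
import Mathlib

section
/- Let p, q ∈ (1,∞) and n a nonnegative integer. Then ∫₀^{π_{p,q}/2} sin_{p,q}^{qn}(t) dt = [(1/q)_n / ((1/p* + 1/q)_n)] · π_{p,q}/2. -/
open Set MeasureTheory Filter

/-- Generalized arcsine: `arcsin_{p,q}(x) = ∫₀ˣ (1 - tᵠ)^(-1/p) dt`. -/
noncomputable def gArcsin (p q x : ℝ) : ℝ := ∫ t in (0:ℝ)..x, (1 - t ^ q) ^ (-(1 / p))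

/-- Generalized pi: `π_{p,q} = 2 ∫₀¹ (1 - tᵠ)^(-1/p) dt`. -/
noncomputable def gPi (p q : ℝ) : ℝ := 2 * gArcsin p q 1

/-- `S` is the generalized sine `sin_{p,q}` (the inverse of `gArcsin p q` on `[0,1]`). -/
def IsGSin (p q : ℝ) (S : ℝ → ℝ) : Prop :=
  ∀ y ∈ Icc (0:ℝ) 1, S (gArcsin p q y) = y

/-- `C` is the generalized cosine `cos_{p,q}`, the derivative of `S = sin_{p,q}`
on `[0, π_{p,q}/2]`. -/
def IsGCos (p q : ℝ) (S C : ℝ → ℝ) : Prop :=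
  ∀ x ∈ Icc (0:ℝ) (gPi p q / 2), HasDerivWithinAt S (C x) (Icc (0:ℝ) (gPi p q / 2)) x

/-!
The substitution `t = arcsin_{p,q} x`, whose derivative is the weight `(1 - x^q)^(-1/p)`, turns the
integral into the moment `I(qn)`, where `I(c) = ∫₀¹ x^c (1 - x^q)^(-1/p) dx`. Integrating by parts
against `x^(c+1) (1 - x^q)^(1/p*)`, which vanishes at both ends, gives
`(c + 1 + q/p*) I(c + q) = (c + 1) I(c)`; iterating from `I(0) = π_{p,q}/2` yields the quotient of
Pochhammer symbols.
-/

open intervalIntegral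

section GeneralizedArcsine

variable {p q : ℝ}

lemma one_sub_rpow_nonneg (hq : 0 ≤ q) {t : ℝ} (ht0 : 0 ≤ t) (ht1 : t ≤ 1) : 0 ≤ 1 - t ^ q :=
  sub_nonneg.2 (Real.rpow_le_one ht0 ht1 hq)

lemma one_sub_rpow_pos (hq : 0 < q) {t : ℝ} (ht0 : 0 ≤ t) (ht1 : t < 1) : 0 < 1 - t ^ q :=
  sub_pos.2 (Real.rpow_lt_one ht0 ht1 hq)

lemma intervalIntegrable_one_sub_rpow_rpow_neg_inv (hp : 1 < p) (hq : 1 ≤ q) :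
    IntervalIntegrable (fun t : ℝ => (1 - t ^ q) ^ (-(1 / p))) volume 0 1 := by
  have hexp : -1 < -(1 / p) := by
    rw [neg_lt_neg_iff, div_lt_one (by linarith)]
    exact hp
  have hdom : IntervalIntegrable (fun t : ℝ => (1 - t) ^ (-(1 / p))) volume 0 1 := by
    simpa using ((intervalIntegrable_rpow' hexp (a := 0) (b := 1)).comp_sub_left 1).symm
  -- dominated by `hdom` because `t ^ q ≤ t` on `[0, 1]` and the exponent is negative
  refine hdom.mono_fun (by fun_prop : Measurable _).aestronglyMeasurable ?_
  filter_upwards [ae_restrict_mem measurableSet_uIoc] with t ht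
  rw [uIoc_of_le zero_le_one] at ht
  rcases ht.2.eq_or_lt with rfl | ht1
  · simp
  have htq : t ^ q ≤ t := by
    simpa using Real.rpow_le_rpow_of_exponent_ge ht.1 ht.2 hq
  rw [Real.norm_of_nonneg (Real.rpow_nonneg (one_sub_rpow_nonneg (by linarith) ht.1.le ht.2) _),
    Real.norm_of_nonneg (Real.rpow_nonneg (by linarith) _)]
  exact Real.rpow_le_rpow_of_nonpos (by linarith) (by linarith)
    (neg_nonpos.2 (by positivity))

lemma gArcsin_one (p q : ℝ) : gArcsin p q 1 = gPi p q / 2 := by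
  rw [gPi]
  ring

lemma continuousOn_gArcsin (hp : 1 < p) (hq : 1 ≤ q) : ContinuousOn (gArcsin p q) (Icc 0 1) := by
  have h := continuousOn_primitive_interval'
    (intervalIntegrable_one_sub_rpow_rpow_neg_inv hp hq) left_mem_uIcc
  rwa [uIcc_of_le zero_le_one] at h

lemma hasDerivAt_gArcsin (hp : 1 < p) (hq : 1 ≤ q) {x : ℝ} (hx : x ∈ Ico (0:ℝ) 1) :
    HasDerivAt (gArcsin p q) ((1 - x ^ q) ^ (-(1 / p))) x := by
  have hint := (intervalIntegrable_one_sub_rpow_rpow_neg_inv hp hq).mono_set (c := 0) (d := x)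
    (by rw [uIcc_of_le hx.1, uIcc_of_le zero_le_one]; exact Icc_subset_Icc_right hx.2.le)
  refine integral_hasDerivAt_right hint
    (by fun_prop : Measurable _).aestronglyMeasurable.stronglyMeasurableAtFilter ?_
  have hbase : ContinuousAt (fun t : ℝ => 1 - t ^ q) x :=
    continuousAt_const.sub (Real.continuousAt_rpow_const _ _ (Or.inr (by linarith)))
  exact hbase.rpow_const (Or.inl (one_sub_rpow_pos (by linarith) hx.1 hx.2).ne')

theorem IsGSin.integral_comp {S : ℝ → ℝ} (hS : IsGSin p q S) (hp : 1 < p) (hq : 1 ≤ q)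
    (g : ℝ → ℝ) :
    ∫ t in (0:ℝ)..(gPi p q / 2), g (S t) = ∫ x in (0:ℝ)..1, (1 - x ^ q) ^ (-(1 / p)) * g x := by
  have hw : ∀ x ∈ Icc (0:ℝ) 1, 0 ≤ (1 - x ^ q) ^ (-(1 / p)) := fun x hx =>
    Real.rpow_nonneg (one_sub_rpow_nonneg (by linarith) hx.1 hx.2) _
  have hchange := integral_Icc_deriv_smul_of_deriv_nonneg (g := g ∘ S) (continuousOn_gArcsin hp hq)
    (fun x hx => hasDerivAt_gArcsin hp hq (Ioo_subset_Ico_self hx))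
    (fun x hx => hw x (Ioo_subset_Icc_self hx)) zero_le_one
  rw [show gArcsin p q 0 = 0 from integral_same, gArcsin_one] at hchange
  have hpi : 0 ≤ gPi p q / 2 := by
    rw [← gArcsin_one]
    exact integral_nonneg zero_le_one hw
  rw [integral_of_le hpi, integral_of_le zero_le_one, ← integral_Icc_eq_integral_Ioc,
    ← integral_Icc_eq_integral_Ioc]
  refine hchange.symm.trans (setIntegral_congr_fun measurableSet_Icc fun x hx => ?_)
  simp [hS x hx]

lemma hasDerivAt_rpow_mul_one_sub_rpow_rpow (hq : 0 < q) {c x : ℝ} (hx : x ∈ Ioo (0:ℝ) 1) :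
    HasDerivAt (fun x => x ^ (c + 1) * (1 - x ^ q) ^ (1 - 1 / p))
      ((c + 1) * ((1 - x ^ q) ^ (-(1 / p)) * x ^ c)
        - (c + 1 + q * (1 - 1 / p)) * ((1 - x ^ q) ^ (-(1 / p)) * x ^ (c + q))) x := by
  have hx0 : x ≠ 0 := hx.1.ne'
  have hu := one_sub_rpow_pos hq hx.1.le hx.2
  have hpow := Real.hasDerivAt_rpow_const (p := c + 1) (Or.inl hx0)
  have hweight := ((Real.hasDerivAt_rpow_const (p := q) (Or.inl hx0)).const_sub 1).rpow_const
    (p := 1 - 1 / p) (Or.inl hu.ne')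
  refine (hpow.mul hweight).congr_deriv ?_
  have e1 : (1 - x ^ q) ^ (1 - 1 / p) = (1 - x ^ q) * (1 - x ^ q) ^ (-(1 / p)) := by
    rw [show (1:ℝ) - 1 / p = 1 + -(1 / p) by ring, Real.rpow_add hu, Real.rpow_one]
  have e2 : x ^ (c + q) = x ^ c * x ^ q := Real.rpow_add hx.1 c q
  have e3 : x ^ (q - 1) * x = x ^ q := by
    rw [← Real.rpow_add_one hx0, sub_add_cancel]
  rw [e1, e2, Real.rpow_add_one hx0, add_sub_cancel_right, show 1 - 1 / p - 1 = -(1 / p) by ring]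
  linear_combination (-q * (1 - 1 / p) * (1 - x ^ q) ^ (-(1 / p)) * x ^ c) * e3

lemma integral_one_sub_rpow_rpow_neg_mul_rpow_add (hp : 1 < p) (hq : 1 ≤ q) {c : ℝ} (hc : 0 ≤ c) :
    (c + 1 + q * (1 - 1 / p)) * ∫ x in (0:ℝ)..1, (1 - x ^ q) ^ (-(1 / p)) * x ^ (c + q)
      = (c + 1) * ∫ x in (0:ℝ)..1, (1 - x ^ q) ^ (-(1 / p)) * x ^ c := by
  have hb : 0 < 1 - 1 / p := sub_pos.2 ((div_lt_one (by linarith)).2 hp)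
  have hint : ∀ e : ℝ, 0 ≤ e →
      IntervalIntegrable (fun x : ℝ => (1 - x ^ q) ^ (-(1 / p)) * x ^ e) volume 0 1 := fun e he =>
    (intervalIntegrable_one_sub_rpow_rpow_neg_inv hp hq).mul_continuousOn
      (Real.continuous_rpow_const he).continuousOn
  have hcont : ContinuousOn (fun x : ℝ => x ^ (c + 1) * (1 - x ^ q) ^ (1 - 1 / p)) (Icc 0 1) :=
    (Real.continuous_rpow_const (by linarith)).continuousOn.mul
      ((continuousOn_const.sub (Real.continuous_rpow_const (by linarith)).continuousOn).rpow_const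
        fun _ _ => Or.inr hb.le)
  -- the boundary term `x ^ (c + 1) * (1 - x ^ q) ^ (1 - 1 / p)` vanishes at both ends
  have hftc := integral_eq_sub_of_hasDeriv_right_of_le zero_le_one hcont
    (fun x hx => (hasDerivAt_rpow_mul_one_sub_rpow_rpow (by linarith) hx).hasDerivWithinAt)
    (((hint c hc).const_mul _).sub ((hint (c + q) (by linarith)).const_mul _))
  rw [integral_sub ((hint c hc).const_mul _) ((hint (c + q) (by linarith)).const_mul _),
    intervalIntegral.integral_const_mul, intervalIntegral.integral_const_mul] at hftc
  simp only [Real.one_rpow, sub_self, Real.zero_rpow hb.ne',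
    Real.zero_rpow (by linarith : c + 1 ≠ 0), mul_zero, zero_mul] at hftc
  linarith

lemma integral_one_sub_rpow_rpow_neg_mul_rpow_nat_mul (hp : 1 < p) (hq : 1 ≤ q) (n : ℕ) :
    ∫ x in (0:ℝ)..1, (1 - x ^ q) ^ (-(1 / p)) * x ^ (q * n)
      = (ascPochhammer ℝ n).eval (1 / q) / (ascPochhammer ℝ n).eval (1 - 1 / p + 1 / q)
        * (gPi p q / 2) := by
  have hb : 0 < 1 - 1 / p := sub_pos.2 ((div_lt_one (by linarith)).2 hp)
  induction n with
  | zero => simp [← gArcsin_one, gArcsin]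
  | succ k ih =>
    have hrec := integral_one_sub_rpow_rpow_neg_mul_rpow_add hp hq (c := q * k) (by positivity)
    have hpoch : (ascPochhammer ℝ k).eval (1 - 1 / p + 1 / q) ≠ 0 :=
      (ascPochhammer_pos k _ (by positivity)).ne'
    have hden : q * k + 1 + q * (1 - 1 / p) ≠ 0 := by positivity
    rw [ih] at hrec
    rw [show q * ((k + 1 : ℕ) : ℝ) = q * k + q by push_cast; ring, ascPochhammer_succ_eval,
      ascPochhammer_succ_eval, ← mul_right_inj' hden, hrec]
    have hq0 : q ≠ 0 := by positivity
    have hshift : 1 - 1 / p + 1 / q + k ≠ 0 := by positivity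
    rw [show q * k + 1 + q * (1 - 1 / p) = q * (1 - 1 / p + 1 / q + k) by field_simp; ring,
      show q * (k : ℝ) + 1 = q * (1 / q + k) by field_simp; ring]
    generalize (ascPochhammer ℝ k).eval (1 / q) = A
    generalize (ascPochhammer ℝ k).eval (1 - 1 / p + 1 / q) = B at hpoch ⊢
    generalize 1 - 1 / p + 1 / q + k = s at hshift ⊢
    field_simp

end GeneralizedArcsine

/-- Corollary 3.5, first formula:
`∫₀^{π_{p,q}/2} sin_{p,q}^{qn} t dt = (1/q)ₙ/((1/p* + 1/q)ₙ) · π_{p,q}/2`. -/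
theorem stmt_10 (p q : ℝ) (n : ℕ) (hp : 1 < p) (hq : 1 < q)
    (S : ℝ → ℝ) (hS : IsGSin p q S) :
    ∫ t in (0:ℝ)..(gPi p q / 2), S t ^ (q * (n : ℝ)) =
      (ascPochhammer ℝ n).eval (1 / q) /
          (ascPochhammer ℝ n).eval (1 / (p / (p - 1)) + 1 / q) *
        (gPi p q / 2) := by
  rw [hS.integral_comp hp hq.le (· ^ (q * (n : ℝ))),
    integral_one_sub_rpow_rpow_neg_mul_rpow_nat_mul hp hq.le,
    one_div_div, sub_div, div_self (by linarith : p ≠ 0)]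
end

section
/- Let p, q ∈ (1,∞) and n a nonnegative integer. Then ∫₀^{π_{p,q}/2} cos_{p,q}^{pn}(t) dt = [(1/p*)_n / ((1/p* + 1/q)_n)] · π_{p,q}/2, where p* = p/(p−1). -/
open Set MeasureTheory Filter

/-! Substituting `t = arcsin_{p,q} y` turns the integral into `∫₀¹ (1 - y^q)^(n - 1/p) dy`, since
differentiating `sin_{p,q} ∘ arcsin_{p,q} = id` gives `cos_{p,q} (arcsin_{p,q} y) = (1 - y^q)^(1/p)`.
Integration by parts gives `J a = ∫₀¹ (1 - y^q)^a dy` the recurrence `(a + 1/q) J a = a J (a - 1)`,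
and iterating it `n` times from `J (-1/p) = π_{p,q}/2` produces the Pochhammer quotient,
with `1/p* = 1 - 1/p`. -/

section OneSubRpow

variable {q : ℝ}

lemma one_sub_rpow_pos_s13 (hq : 0 < q) {y : ℝ} (hy : y ∈ Ico (0:ℝ) 1) : 0 < 1 - y ^ q :=
  sub_pos.2 (Real.rpow_lt_one hy.1 hy.2 hq)

lemma continuousAt_one_sub_rpow_rpow (hq : 0 < q) (e : ℝ) {y : ℝ} (hy : y ∈ Ico (0:ℝ) 1) :
    ContinuousAt (fun y : ℝ => (1 - y ^ q) ^ e) y :=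
  (continuousAt_const.sub (Real.continuousAt_rpow_const y q (Or.inr hq.le))).rpow_const
    (Or.inl (one_sub_rpow_pos_s13 hq hy).ne')

lemma continuous_one_sub_rpow_rpow (hq : 0 < q) {e : ℝ} (he : 0 ≤ e) :
    Continuous (fun y : ℝ => (1 - y ^ q) ^ e) :=
  (continuous_const.sub (Real.continuous_rpow_const hq.le)).rpow_const fun _ => Or.inr he

/-- For `e < 0` the integrand is dominated by `(1 - y) ^ e`, since `y ^ q ≤ y` on `[0, 1]`. -/
lemma intervalIntegrable_one_sub_rpow_rpow (hq : 1 ≤ q) {e : ℝ} (he : -1 < e) :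
    IntervalIntegrable (fun y : ℝ => (1 - y ^ q) ^ e) volume 0 1 := by
  rcases le_or_gt 0 e with he0 | he0
  · exact (continuous_one_sub_rpow_rpow (by linarith) he0).intervalIntegrable 0 1
  have hdom : IntervalIntegrable (fun y : ℝ => (1 - y) ^ e) volume 0 1 := by
    simpa using
      ((intervalIntegral.intervalIntegrable_rpow' (a := 0) (b := 1) he).comp_sub_left 1).symm
  refine hdom.mono_fun (by fun_prop : Measurable _).aestronglyMeasurable ?_
  rw [uIoc_of_le zero_le_one, EventuallyLE, ae_restrict_iff' measurableSet_Ioc]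
  refine Eventually.of_forall fun y ⟨hy0, hy1⟩ => ?_
  rcases hy1.eq_or_lt with rfl | hy1
  · simp [Real.zero_rpow he0.ne]
  have hyq : y ^ q ≤ y := Real.rpow_le_self_of_le_one hy0.le hy1.le hq
  rw [Real.norm_of_nonneg (Real.rpow_nonneg (by linarith) e),
    Real.norm_of_nonneg (Real.rpow_nonneg (by linarith) e)]
  exact Real.rpow_le_rpow_of_nonpos (by linarith) (by linarith) he0.le

lemma hasDerivAt_mul_one_sub_rpow_rpow (hq : 0 < q) (a : ℝ) {y : ℝ} (hy : y ∈ Ioo (0:ℝ) 1) :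
    HasDerivAt (fun y : ℝ => y * (1 - y ^ q) ^ a)
      ((1 + a * q) * (1 - y ^ q) ^ a - a * q * (1 - y ^ q) ^ (a - 1)) y := by
  have hbase := one_sub_rpow_pos_s13 hq (Ioo_subset_Ico_self hy)
  have hderiv := (hasDerivAt_id' y).mul
    (((Real.hasDerivAt_rpow_const (p := q) (Or.inl hy.1.ne')).const_sub 1).rpow_const
      (p := a) (Or.inl hbase.ne'))
  refine hderiv.congr_deriv ?_
  have hy_pow : y ^ q = y * y ^ (q - 1) := by
    conv_lhs => rw [show q = 1 + (q - 1) by ring, Real.rpow_add hy.1, Real.rpow_one]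
  have hbase_pow : (1 - y ^ q) ^ a = (1 - y ^ q) * (1 - y ^ q) ^ (a - 1) := by
    conv_lhs => rw [show a = 1 + (a - 1) by ring, Real.rpow_add hbase, Real.rpow_one]
  rw [hbase_pow]
  linear_combination (a * q * (1 - y ^ q) ^ (a - 1)) * hy_pow

/-- Integration by parts against `y ↦ y`, whose boundary term `y (1 - y ^ q) ^ a` vanishes at
both ends. -/
lemma integral_one_sub_rpow_rpow_recurrence (hq : 1 ≤ q) {a : ℝ} (ha : 0 < a) :
    (a + 1 / q) * ∫ y in (0:ℝ)..1, (1 - y ^ q) ^ a =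
      a * ∫ y in (0:ℝ)..1, (1 - y ^ q) ^ (a - 1) := by
  have hq0 : 0 < q := by linarith
  have hint := intervalIntegrable_one_sub_rpow_rpow hq (e := a) (by linarith)
  have hint' := intervalIntegrable_one_sub_rpow_rpow hq (e := a - 1) (by linarith)
  have hFTC := intervalIntegral.integral_eq_sub_of_hasDeriv_right_of_le
    (f := fun y : ℝ => y * (1 - y ^ q) ^ a) zero_le_one
    ((continuous_id.mul (continuous_one_sub_rpow_rpow hq0 ha.le)).continuousOn)
    (fun y hy => (hasDerivAt_mul_one_sub_rpow_rpow hq0 a hy).hasDerivWithinAt)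
    ((hint.const_mul _).sub (hint'.const_mul _))
  rw [intervalIntegral.integral_sub (hint.const_mul _) (hint'.const_mul _),
    intervalIntegral.integral_const_mul, intervalIntegral.integral_const_mul] at hFTC
  simp only [Real.one_rpow, sub_self, Real.zero_rpow ha.ne', mul_zero, zero_mul] at hFTC
  field_simp
  linarith

lemma ascPochhammer_eval_mul_integral_one_sub_rpow_rpow (hq : 1 ≤ q) {b : ℝ} (hb : 0 < b)
    (n : ℕ) :
    (ascPochhammer ℝ n).eval (b + 1 / q) * ∫ y in (0:ℝ)..1, (1 - y ^ q) ^ (b - 1 + n) =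
      (ascPochhammer ℝ n).eval b * ∫ y in (0:ℝ)..1, (1 - y ^ q) ^ (b - 1) := by
  induction n with
  | zero => simp
  | succ n ih =>
    have hrec := integral_one_sub_rpow_rpow_recurrence hq (a := b + n) (by positivity)
    rw [show b + n - 1 = b - 1 + n by ring] at hrec
    rw [ascPochhammer_succ_eval, ascPochhammer_succ_eval, Nat.cast_succ,
      show b - 1 + (n + 1) = b + n by ring]
    linear_combination (ascPochhammer ℝ n).eval (b + 1 / q) * hrec + (b + n) * ih

end OneSubRpow

section GeneralizedTrig

variable {p q : ℝ}

lemma gArcsin_zero : gArcsin p q 0 = 0 := intervalIntegral.integral_same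

lemma gPi_div_two : gPi p q / 2 = gArcsin p q 1 := by unfold gPi; ring

lemma gArcsin_continuousOn (hp : 1 < p) (hq : 1 < q) : ContinuousOn (gArcsin p q) (Icc 0 1) := by
  have hint := intervalIntegrable_one_sub_rpow_rpow hq.le (e := -(1 / p))
    (neg_lt_neg ((div_lt_one (by linarith)).2 hp))
  have h := intervalIntegral.continuousOn_primitive_interval' hint
    (left_mem_uIcc (a := (0:ℝ)) (b := 1))
  rwa [uIcc_of_le zero_le_one] at h

lemma gArcsin_hasDerivAt (hq : 0 < q) {y : ℝ} (hy : y ∈ Ioo (0:ℝ) 1) :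
    HasDerivAt (gArcsin p q) ((1 - y ^ q) ^ (-(1 / p))) y := by
  have hcont : ContinuousOn (fun y : ℝ => (1 - y ^ q) ^ (-(1 / p))) (Icc 0 y) := fun x hx =>
    (continuousAt_one_sub_rpow_rpow hq _ ⟨hx.1, hx.2.trans_lt hy.2⟩).continuousWithinAt
  exact intervalIntegral.integral_hasDerivAt_right (hcont.intervalIntegrable_of_Icc hy.1.le)
    (by fun_prop : Measurable _).stronglyMeasurable.stronglyMeasurableAtFilter
    (continuousAt_one_sub_rpow_rpow hq _ (Ioo_subset_Ico_self hy))

lemma gArcsin_strictMonoOn (hp : 1 < p) (hq : 1 < q) : StrictMonoOn (gArcsin p q) (Icc 0 1) :=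
  strictMonoOn_of_deriv_pos (convex_Icc 0 1) (gArcsin_continuousOn hp hq) fun y hy => by
    rw [interior_Icc] at hy
    rw [(gArcsin_hasDerivAt (by linarith) hy).deriv]
    exact Real.rpow_pos_of_pos (one_sub_rpow_pos_s13 (by linarith) (Ioo_subset_Ico_self hy)) _

lemma gArcsin_image_Ioo (hp : 1 < p) (hq : 1 < q) :
    gArcsin p q '' Ioo 0 1 = Ioo 0 (gPi p q / 2) := by
  rw [(gArcsin_continuousOn hp hq).image_Ioo_of_strictMonoOn zero_le_one
    (gArcsin_strictMonoOn hp hq), gArcsin_zero, gPi_div_two]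

lemma gArcsin_mapsTo (hp : 1 < p) (hq : 1 < q) :
    MapsTo (gArcsin p q) (Icc 0 1) (Icc 0 (gPi p q / 2)) := by
  intro y hy
  have h := (gArcsin_strictMonoOn hp hq).monotoneOn.image_Icc_subset (mem_image_of_mem _ hy)
  rwa [gArcsin_zero, ← gPi_div_two] at h

lemma IsGCos.apply_gArcsin {S C : ℝ → ℝ} (hp : 1 < p) (hq : 1 < q) (hS : IsGSin p q S)
    (hC : IsGCos p q S C) {y : ℝ} (hy : y ∈ Ioo (0:ℝ) 1) :
    C (gArcsin p q y) = (1 - y ^ q) ^ (1 / p) := by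
  have hbase := one_sub_rpow_pos_s13 (by linarith) (Ioo_subset_Ico_self hy)
  have hcomp : HasDerivWithinAt (S ∘ gArcsin p q)
      (C (gArcsin p q y) * (1 - y ^ q) ^ (-(1 / p))) (Ioo 0 1) y :=
    (hC _ (gArcsin_mapsTo hp hq (Ioo_subset_Icc_self hy))).comp y
      (gArcsin_hasDerivAt (by linarith) hy).hasDerivWithinAt
      ((gArcsin_mapsTo hp hq).mono_left Ioo_subset_Icc_self)
  have hid : HasDerivAt id (C (gArcsin p q y) * (1 - y ^ q) ^ (-(1 / p))) y :=
    (hcomp.hasDerivAt (Ioo_mem_nhds hy.1 hy.2)).congr_of_eventuallyEq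
      (eventually_of_mem (Ioo_mem_nhds hy.1 hy.2) fun z hz =>
        (hS z (Ioo_subset_Icc_self hz)).symm)
  have hone := hid.unique (hasDerivAt_id y)
  rw [Real.rpow_neg hbase.le] at hone
  field_simp at hone
  exact hone

lemma integral_gCos_rpow {S C : ℝ → ℝ} (hp : 1 < p) (hq : 1 < q) (hS : IsGSin p q S)
    (hC : IsGCos p q S C) (r : ℝ) :
    ∫ t in (0:ℝ)..(gPi p q / 2), C t ^ r = ∫ y in (0:ℝ)..1, (1 - y ^ q) ^ ((r - 1) / p) := by
  have hL : 0 ≤ gPi p q / 2 :=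
    nonempty_Icc.1 ⟨_, gArcsin_mapsTo hp hq (left_mem_Icc.2 zero_le_one)⟩
  rw [intervalIntegral.integral_of_le hL, intervalIntegral.integral_of_le zero_le_one,
    integral_Ioc_eq_integral_Ioo, integral_Ioc_eq_integral_Ioo, ← gArcsin_image_Ioo hp hq,
    integral_image_eq_integral_abs_deriv_smul measurableSet_Ioo
      (fun y hy => (gArcsin_hasDerivAt (by linarith) hy).hasDerivWithinAt)
      ((gArcsin_strictMonoOn hp hq).injOn.mono Ioo_subset_Icc_self)]
  refine setIntegral_congr_fun measurableSet_Ioo fun y hy => ?_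
  have hbase := one_sub_rpow_pos_s13 (q := q) (by linarith) (Ioo_subset_Ico_self hy)
  rw [hC.apply_gArcsin hp hq hS hy, abs_of_pos (Real.rpow_pos_of_pos hbase _), smul_eq_mul,
    ← Real.rpow_mul hbase.le, ← Real.rpow_add hbase]
  ring_nf

end GeneralizedTrig

/-- Corollary 3.5, fourth formula:
`∫₀^{π_{p,q}/2} cos_{p,q}^{pn} t dt = (1/p*)ₙ/((1/p* + 1/q)ₙ) · π_{p,q}/2`. -/
theorem stmt_13 (p q : ℝ) (n : ℕ) (hp : 1 < p) (hq : 1 < q)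
    (S C : ℝ → ℝ) (hS : IsGSin p q S) (hC : IsGCos p q S C) :
    ∫ t in (0:ℝ)..(gPi p q / 2), C t ^ (p * (n : ℝ)) =
      (ascPochhammer ℝ n).eval (1 / (p / (p - 1))) /
          (ascPochhammer ℝ n).eval (1 / (p / (p - 1)) + 1 / q) *
        (gPi p q / 2) := by
  have hb : 1 / (p / (p - 1)) = 1 - 1 / p := by field_simp
  have hb_pos : 0 < 1 - 1 / p := sub_pos.2 ((div_lt_one (by linarith)).2 hp)
  have hrec := ascPochhammer_eval_mul_integral_one_sub_rpow_rpow hq.le hb_pos n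
  have hden : 0 < (ascPochhammer ℝ n).eval (1 - 1 / p + 1 / q) :=
    ascPochhammer_pos n _ (by positivity)
  rw [show 1 - 1 / p - 1 + n = (p * n - 1) / p by field_simp; ring,
    show 1 - 1 / p - 1 = -(1 / p) by ring, ← gArcsin, ← gPi_div_two,
    ← integral_gCos_rpow hp hq hS hC] at hrec
  rw [hb, div_mul_eq_mul_div, eq_div_iff hden.ne']
  linarith
end
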